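/- Let α_i > 0 (i = 1,…,s) and β > 0, let ℳ = {M_0, M_1, M_2} be a triple of (n+m) × (n+m) matrices, and suppose T_ℳ is well-defined. Then T_ℳ is weakly firmly nonexpansive with respect to ℳ. -/

import Mathlib

open Matrix Filter Topology

noncomputable section

/-- Spectral norm (largest singular value) of a real matrix. -/
def specNorm {p q : Type*} [Fintype p] [Fintype q] [DecidableEq q]
    (M : Matrix p q ℝ) : ℝ :=
  ‖LinearMap.toContinuousLinearMap (Matrix.toEuclideanLin M)‖

/-- The positive semidefinite square root of a positive semidefinite matrix (the definition
`Matrix.PosSemidef.sqrt` of the older Mathlib, which has since been removed). -/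
def Matrix.PosSemidef.sqrt {n : Type*} [Fintype n] [DecidableEq n]
    {A : Matrix n n ℝ} (hA : A.PosSemidef) : Matrix n n ℝ :=
  hA.1.eigenvectorUnitary.1 * diagonal ((√·) ∘ hA.1.eigenvalues) *
  (star hA.1.eigenvectorUnitary : Matrix n n ℝ)

/-- Condition-M for a triple of matrices: `M0 = M1 + M2`, `H := M0 + M2` is symmetric
positive definite, and `‖H^{-1/2} M2 H^{-1/2}‖₂ < 1/2` (here `H^{-1/2}` is the positive
semidefinite square root of `H⁻¹`). -/
def ConditionM {d : Type*} [Fintype d] [DecidableEq d] (M0 M1 M2 : Matrix d d ℝ) : Prop :=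
  M0 = M1 + M2 ∧ ∃ hH : (M0 + M2).PosDef,
    specNorm (hH.inv.posSemidef.sqrt * M2 * hH.inv.posSemidef.sqrt) < 1 / 2

/-- The cost functional defining the proximity operator `prox_{φ,H}` at input `x`. -/
def proxCost {ι : Type*} [Fintype ι] (φ : (ι → ℝ) → EReal) (H : Matrix ι ι ℝ)
    (x u : ι → ℝ) : EReal :=
  ((((1 : ℝ) / 2) * ((u - x) ⬝ᵥ H.mulVec (u - x)) : ℝ) : EReal) + φ u

/-- `p = prox_{φ,H}(x)`: `p` is the unique minimizer of the prox cost. -/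
def IsProx {ι : Type*} [Fintype ι] (φ : (ι → ℝ) → EReal) (H : Matrix ι ι ℝ)
    (x p : ι → ℝ) : Prop :=
  (∀ u, proxCost φ H x p ≤ proxCost φ H x u) ∧
  ∀ q, (∀ u, proxCost φ H x q ≤ proxCost φ H x u) → q = p

/-- Proper lower semicontinuous convex extended-real-valued function. -/
def ProperConvexLsc {ι : Type*} [Fintype ι] (f : (ι → ℝ) → EReal) : Prop :=
  (∃ x, f x ≠ ⊤) ∧ (∀ x, f x ≠ ⊥) ∧ LowerSemicontinuous f ∧
  ∀ x y : ι → ℝ, ∀ t : ℝ, 0 < t → t < 1 →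
    f (t • x + (1 - t) • y) ≤ (t : EReal) * f x + ((1 - t : ℝ) : EReal) * f y

/-- Scaling of an extended-real-valued function by a real constant. -/
def smulF {V : Type*} (c : ℝ) (φ : V → EReal) : V → EReal := fun u => (c : EReal) * φ u

/-- The conjugate of the indicator of `C = {b}`: `ι_C*(y) = ⟨y, b⟩`. -/
def iotaCstar {m : ℕ} (b : Fin m → ℝ) : (Fin m → ℝ) → EReal :=
  fun y => ((y ⬝ᵥ b : ℝ) : EReal)

variable {s m : ℕ} {n : Fin s → ℕ}

/-- Index type for the concatenated variable `x = (x_1, …, x_s)`. -/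
abbrev XIdx (n : Fin s → ℕ) := (i : Fin s) × Fin (n i)

/-- Index type for the full variable `v = (x, y)`. -/
abbrev FIdx (n : Fin s → ℕ) (m : ℕ) := XIdx n ⊕ Fin m

/-- The `i`-th block of a concatenated vector. -/
def blk (x : XIdx n → ℝ) (i : Fin s) : Fin (n i) → ℝ := fun j => x ⟨i, j⟩

/-- The matrix `A = [A_1 … A_s]`. -/
def bigA (A : ∀ i : Fin s, Matrix (Fin m) (Fin (n i)) ℝ) : Matrix (Fin m) (XIdx n) ℝ :=
  Matrix.of fun r p => A p.1 r p.2

/-- The separable objective `∑ f_i(x_i)`. -/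
def objSum (f : ∀ i : Fin s, (Fin (n i) → ℝ) → EReal) (x : XIdx n → ℝ) : EReal :=
  ∑ i, f i (blk x i)

/-- `∑ A_i x_i`. -/
def sumAx (A : ∀ i : Fin s, Matrix (Fin m) (Fin (n i)) ℝ) (x : XIdx n → ℝ) : Fin m → ℝ :=
  ∑ i, (A i).mulVec (blk x i)

/-- `x` is a solution of problem (P). -/
def IsSolution (f : ∀ i : Fin s, (Fin (n i) → ℝ) → EReal)
    (A : ∀ i : Fin s, Matrix (Fin m) (Fin (n i)) ℝ) (b : Fin m → ℝ)
    (x : XIdx n → ℝ) : Prop :=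
  sumAx A x = b ∧ ∀ z : XIdx n → ℝ, sumAx A z = b → objSum f x ≤ objSum f z

/-- `b ∈ A(ri(dom(∑ f_i)))` where `ri` is the relative (intrinsic) interior. -/
def RiCond (f : ∀ i : Fin s, (Fin (n i) → ℝ) → EReal)
    (A : ∀ i : Fin s, Matrix (Fin m) (Fin (n i)) ℝ) (b : Fin m → ℝ) : Prop :=
  b ∈ (fun x => sumAx A x) '' intrinsicInterior ℝ {x : XIdx n → ℝ | objSum f x ≠ ⊤}

/-- The `x`-part of a full vector. -/
def xpart (v : FIdx n m → ℝ) : XIdx n → ℝ := fun p => v (Sum.inl p)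

/-- The `y`-part of a full vector. -/
def ypart (v : FIdx n m → ℝ) : Fin m → ℝ := fun r => v (Sum.inr r)

/-- The function `Φ(x_1,…,x_s,y) = ∑ f_i(x_i) + ι_C*(y)`. -/
def PhiFun (f : ∀ i : Fin s, (Fin (n i) → ℝ) → EReal) (b : Fin m → ℝ)
    (v : FIdx n m → ℝ) : EReal :=
  objSum f (xpart v) + iotaCstar b (ypart v)

/-- The diagonal matrix `R = diag((β/α_1)I, …, (β/α_s)I, (1/β)I)`. -/
def Rmat (α : Fin s → ℝ) (β : ℝ) : Matrix (FIdx n m) (FIdx n m) ℝ :=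
  Matrix.diagonal (Sum.elim (fun p : XIdx n => β / α p.1) fun _ => 1 / β)

/-- The inverse `R⁻¹` of the diagonal matrix `R`. -/
def Rinv (α : Fin s → ℝ) (β : ℝ) : Matrix (FIdx n m) (FIdx n m) ℝ :=
  Matrix.diagonal (Sum.elim (fun p : XIdx n => α p.1 / β) fun _ => β)

/-- The expansive matrix `E = [[I, −P⁻¹Aᵀ],[βA, I]]`. -/
def Emat (A : ∀ i : Fin s, Matrix (Fin m) (Fin (n i)) ℝ) (α : Fin s → ℝ) (β : ℝ) :
    Matrix (FIdx n m) (FIdx n m) ℝ :=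
  Matrix.fromBlocks 1 (-(Matrix.diagonal (fun p : XIdx n => α p.1 / β) * (bigA A)ᵀ))
    (β • bigA A) 1

/-- The skew-symmetric matrix `S_A = [[0, −Aᵀ],[A, 0]]`. -/
def SAmat (A : ∀ i : Fin s, Matrix (Fin m) (Fin (n i)) ℝ) :
    Matrix (FIdx n m) (FIdx n m) ℝ :=
  Matrix.fromBlocks 0 (-(bigA A)ᵀ) (bigA A) 0

/-- `w = 𝒯(v)`, where `𝒯(x_1,…,x_s,y) = (prox_{(α_1/β)f_1}x_1, …, prox_{(α_s/β)f_s}x_s,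
prox_{β ι_C*}y)`. -/
def isT (f : ∀ i : Fin s, (Fin (n i) → ℝ) → EReal) (b : Fin m → ℝ)
    (α : Fin s → ℝ) (β : ℝ) (v w : FIdx n m → ℝ) : Prop :=
  (∀ i, IsProx (smulF (α i / β) (f i)) 1 (blk (xpart v) i) (blk (xpart w) i)) ∧
  IsProx (smulF β (iotaCstar b)) 1 (ypart v) (ypart w)

/-- `w = T_ℳ(u₁, u₂)`, i.e. `w = 𝒯((E − R⁻¹M₀)w + R⁻¹M₁u₁ + R⁻¹M₂u₂)`. -/
def isTM (f : ∀ i : Fin s, (Fin (n i) → ℝ) → EReal)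
    (A : ∀ i : Fin s, Matrix (Fin m) (Fin (n i)) ℝ) (b : Fin m → ℝ)
    (α : Fin s → ℝ) (β : ℝ) (M0 M1 M2 : Matrix (FIdx n m) (FIdx n m) ℝ)
    (u1 u2 w : FIdx n m → ℝ) : Prop :=
  isT f b α β ((Emat A α β - Rinv α β * M0).mulVec w + (Rinv α β * M1).mulVec u1
    + (Rinv α β * M2).mulVec u2) w

/-- `T_ℳ` is well-defined. -/
def TMWellDefined (f : ∀ i : Fin s, (Fin (n i) → ℝ) → EReal)
    (A : ∀ i : Fin s, Matrix (Fin m) (Fin (n i)) ℝ) (b : Fin m → ℝ)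
    (α : Fin s → ℝ) (β : ℝ) (M0 M1 M2 : Matrix (FIdx n m) (FIdx n m) ℝ) : Prop :=
  ∀ u1 u2 : FIdx n m → ℝ, ∃! w, isTM f A b α β M0 M1 M2 u1 u2 w

/-!
Each block of `𝒯` is the proximity operator of a proper convex function, hence firmly
nonexpansive; weighting the blocks by `R` makes `𝒯` firmly nonexpansive in the `R`-inner product,
`⟨Δz, R Δz⟩ ≤ ⟨Δz, R Δv⟩`. For the argument `v = (E − R⁻¹M₀)z + R⁻¹M₁u + R⁻¹M₂w` of `𝒯` one has
`R v = (R + S_A − M₀)z + M₁u + M₂w`, because `R (E − I) = S_A`. As `S_A` is skew-symmetric it drops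
out of the quadratic form, the `R`-terms cancel, and what remains is the claimed inequality.
-/

def IsProperConvex {ι : Type*} (φ : (ι → ℝ) → EReal) : Prop :=
  (∃ x, φ x ≠ ⊤) ∧ (∀ x, φ x ≠ ⊥) ∧ ∀ x y : ι → ℝ, ∀ t : ℝ, 0 < t → t < 1 →
    φ (t • x + (1 - t) • y) ≤ (t : EReal) * φ x + ((1 - t : ℝ) : EReal) * φ y

lemma ProperConvexLsc.isProperConvex {ι : Type*} [Fintype ι] {φ : (ι → ℝ) → EReal}
    (hφ : ProperConvexLsc φ) : IsProperConvex φ :=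
  ⟨hφ.1, hφ.2.1, hφ.2.2.2⟩

lemma IsProperConvex.smulF_of_nonneg {ι : Type*} {φ : (ι → ℝ) → EReal} (hφ : IsProperConvex φ)
    {c : ℝ} (hc : 0 ≤ c) : IsProperConvex (smulF c φ) := by
  obtain ⟨⟨u, hu⟩, hbot, hconv⟩ := hφ
  have hc' : (0 : EReal) ≤ c := EReal.coe_nonneg.2 hc
  refine ⟨⟨u, ?_⟩, fun x => ?_, fun x y t ht0 ht1 => ?_⟩
  · exact (EReal.mul_ne_top _ _).2
      ⟨.inl (EReal.coe_ne_bot c), .inl hc', .inl (EReal.coe_ne_top c), .inr hu⟩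
  · exact (EReal.mul_ne_bot _ _).2
      ⟨.inl (EReal.coe_ne_bot c), .inr (hbot x), .inl (EReal.coe_ne_top c), .inl hc'⟩
  · calc smulF c φ (t • x + (1 - t) • y)
        ≤ (c : EReal) * ((t : EReal) * φ x + ((1 - t : ℝ) : EReal) * φ y) :=
          mul_le_mul_of_nonneg_left (hconv x y t ht0 ht1) hc'
      _ = (t : EReal) * smulF c φ x + ((1 - t : ℝ) : EReal) * smulF c φ y := by
          rw [EReal.left_distrib_of_nonneg_of_ne_top hc' (EReal.coe_ne_top c), smulF, smulF,
            mul_left_comm, mul_left_comm (c : EReal)]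

lemma isProperConvex_iotaCstar {m : ℕ} (b : Fin m → ℝ) : IsProperConvex (iotaCstar b) := by
  refine ⟨⟨0, EReal.coe_ne_top _⟩, fun _ => EReal.coe_ne_bot _, fun x y t _ _ => le_of_eq ?_⟩
  simp only [iotaCstar, ← EReal.coe_mul, ← EReal.coe_add, add_dotProduct, smul_dotProduct,
    smul_eq_mul]

section Prox

variable {ι : Type*} [Fintype ι] {φ : (ι → ℝ) → EReal}

lemma IsProperConvex.exists_coe_of_forall_proxCost_le (hφ : IsProperConvex φ) {H : Matrix ι ι ℝ}
    {x p : ι → ℝ} (hp : ∀ u, proxCost φ H x p ≤ proxCost φ H x u) : ∃ a : ℝ, φ p = a := by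
  obtain ⟨⟨u, hu⟩, hbot, -⟩ := hφ
  refine ⟨(φ p).toReal, (EReal.coe_toReal (fun htop => ?_) (hbot p)).symm⟩
  have hcost := hp u
  rw [proxCost, proxCost, htop, EReal.add_top_of_ne_bot (EReal.coe_ne_bot _), top_le_iff,
    ← EReal.coe_toReal hu (hbot u), ← EReal.coe_add] at hcost
  exact EReal.coe_ne_top _ hcost

lemma IsProperConvex.prox_variational_ineq [DecidableEq ι] (hφ : IsProperConvex φ)
    {x p q : ι → ℝ} (hp : ∀ u, proxCost φ 1 x p ≤ proxCost φ 1 x u) {a c : ℝ} (ha : φ p = a)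
    (hc : φ q = c) :
    a + (x - p) ⬝ᵥ (q - p) ≤ c := by
  set D := (q - p) ⬝ᵥ (q - p)
  -- compare the cost at `p` with the cost at `p + t (q - p)` and divide by `t`
  have hsmall : ∀ t ∈ Set.Ioo (0 : ℝ) 1, a + (x - p) ⬝ᵥ (q - p) - c ≤ t * D / 2 := by
    rintro t ⟨ht0, ht1⟩
    have hcost := (hp (t • q + (1 - t) • p)).trans
      (add_le_add_right (hφ.2.2 q p t ht0 ht1) _)
    rw [proxCost, ha, hc, ← EReal.coe_mul, ← EReal.coe_mul, ← EReal.coe_add,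
      ← EReal.coe_add, ← EReal.coe_add, EReal.coe_le_coe_iff, Matrix.one_mulVec,
      Matrix.one_mulVec] at hcost
    have hmid : t • q + (1 - t) • p - x = (p - x) + t • (q - p) := by
      ext k; simp only [Pi.add_apply, Pi.sub_apply, Pi.smul_apply, smul_eq_mul]; ring
    have hexpand : (t • q + (1 - t) • p - x) ⬝ᵥ (t • q + (1 - t) • p - x)
        = (p - x) ⬝ᵥ (p - x) - 2 * t * ((x - p) ⬝ᵥ (q - p)) + t ^ 2 * D := by
      rw [hmid, ← neg_sub x p]
      simp only [add_dotProduct, dotProduct_add, smul_dotProduct, dotProduct_smul,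
        neg_dotProduct, dotProduct_neg, dotProduct_comm (q - p) (x - p), smul_eq_mul, D]
      ring
    rw [hexpand] at hcost
    have : t * (a + (x - p) ⬝ᵥ (q - p) - c) ≤ t * (t * D / 2) := by linarith
    exact le_of_mul_le_mul_left this ht0
  have hlim : Tendsto (fun t : ℝ => t * D / 2) (𝓝[>] 0) (𝓝 0) := by
    have : Tendsto (fun t : ℝ => t * D / 2) (𝓝 0) (𝓝 (0 * D / 2)) :=
      (by fun_prop : Continuous fun t : ℝ => t * D / 2).tendsto 0
    simpa using this.mono_left nhdsWithin_le_nhds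
  have := ge_of_tendsto hlim (Filter.mem_of_superset (Ioo_mem_nhdsGT one_pos) hsmall)
  linarith

lemma IsProperConvex.prox_firm [DecidableEq ι] (hφ : IsProperConvex φ) {x₁ p₁ x₂ p₂ : ι → ℝ}
    (h₁ : IsProx φ 1 x₁ p₁) (h₂ : IsProx φ 1 x₂ p₂) :
    (p₂ - p₁) ⬝ᵥ (p₂ - p₁) ≤ (p₂ - p₁) ⬝ᵥ (x₂ - x₁) := by
  obtain ⟨a₁, ha₁⟩ := hφ.exists_coe_of_forall_proxCost_le h₁.1
  obtain ⟨a₂, ha₂⟩ := hφ.exists_coe_of_forall_proxCost_le h₂.1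
  have hv₁ := hφ.prox_variational_ineq h₁.1 ha₁ ha₂
  have hv₂ := hφ.prox_variational_ineq h₂.1 ha₂ ha₁
  have hsum : (x₁ - p₁) ⬝ᵥ (p₂ - p₁) + (x₂ - p₂) ⬝ᵥ (p₁ - p₂)
      = (p₂ - p₁) ⬝ᵥ (p₂ - p₁) - (p₂ - p₁) ⬝ᵥ (x₂ - x₁) := by
    simp only [sub_dotProduct, dotProduct_sub, dotProduct_comm x₁, dotProduct_comm x₂,
      dotProduct_comm p₂ p₁]
    ring
  linarith

end Prox

lemma dotProduct_mulVec_self_eq_zero_of_transpose_eq_neg {ι : Type*} [Fintype ι]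
    {S : Matrix ι ι ℝ} (hS : Sᵀ = -S) (v : ι → ℝ) : v ⬝ᵥ S *ᵥ v = 0 := by
  have h : v ⬝ᵥ S *ᵥ v = -(v ⬝ᵥ S *ᵥ v) := by
    conv_lhs => rw [Matrix.dotProduct_mulVec, ← Matrix.mulVec_transpose, hS, Matrix.neg_mulVec,
      neg_dotProduct, dotProduct_comm]
  linarith

lemma SAmat_transpose (A : ∀ i : Fin s, Matrix (Fin m) (Fin (n i)) ℝ) :
    (SAmat (n := n) (m := m) A)ᵀ = -SAmat A := by
  rw [SAmat, Matrix.fromBlocks_transpose, Matrix.fromBlocks_neg]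
  simp

section Blocks

variable {α : Fin s → ℝ} {β : ℝ}

lemma Rmat_mul_Rinv (hα : ∀ i, α i ≠ 0) (hβ : β ≠ 0) :
    Rmat (n := n) (m := m) α β * Rinv α β = 1 := by
  rw [Rmat, Rinv, Matrix.diagonal_mul_diagonal, ← Matrix.diagonal_one]
  congr 1
  ext (p | r)
  · simp [hα, hβ]
  · simp [hβ]

lemma Rmat_mul_Emat (A : ∀ i : Fin s, Matrix (Fin m) (Fin (n i)) ℝ) (hα : ∀ i, α i ≠ 0)
    (hβ : β ≠ 0) : Rmat α β * Emat A α β = SAmat A + Rmat α β := by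
  ext (p | r) (q | r') <;>
    simp [Rmat, Emat, SAmat, Matrix.diagonal_mul, Matrix.one_apply, Matrix.diagonal_apply]
  · field_simp [hα p.1, hβ]
  · field_simp [hβ]

lemma Rmat_mulVec_isTM_arg (A : ∀ i : Fin s, Matrix (Fin m) (Fin (n i)) ℝ)
    (hα : ∀ i, α i ≠ 0) (hβ : β ≠ 0) (M0 M1 M2 : Matrix (FIdx n m) (FIdx n m) ℝ)
    (z u w : FIdx n m → ℝ) :
    Rmat α β *ᵥ ((Emat A α β - Rinv α β * M0) *ᵥ z + (Rinv α β * M1) *ᵥ u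
      + (Rinv α β * M2) *ᵥ w)
      = SAmat A *ᵥ z + Rmat α β *ᵥ z - M0 *ᵥ z + M1 *ᵥ u + M2 *ᵥ w := by
  simp only [Matrix.mulVec_add, Matrix.mulVec_mulVec, Matrix.mul_sub, ← Matrix.mul_assoc]
  simp only [Rmat_mul_Rinv hα hβ, Rmat_mul_Emat A hα hβ, Matrix.one_mul, Matrix.sub_mulVec,
    Matrix.add_mulVec]

lemma dotProduct_Rmat_mulVec (e c : FIdx n m → ℝ) :
    e ⬝ᵥ Rmat α β *ᵥ c = ∑ i, β / α i * (blk (xpart e) i ⬝ᵥ blk (xpart c) i)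
      + 1 / β * (ypart e ⬝ᵥ ypart c) := by
  simp only [Rmat, dotProduct, Matrix.mulVec_diagonal, Fintype.sum_sum_type,
    Fintype.sum_sigma, Finset.mul_sum, Sum.elim_inl, Sum.elim_inr, blk, xpart, ypart]
  congr 1 <;> refine Finset.sum_congr rfl fun _ _ => ?_
  · exact Finset.sum_congr rfl fun _ _ => by ring
  · ring

lemma isT_firm {f : ∀ i : Fin s, (Fin (n i) → ℝ) → EReal} (hf : ∀ i, IsProperConvex (f i))
    (b : Fin m → ℝ) (hα : ∀ i, 0 < α i) (hβ : 0 < β) {v₁ z₁ v₂ z₂ : FIdx n m → ℝ}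
    (h₁ : isT f b α β v₁ z₁) (h₂ : isT f b α β v₂ z₂) :
    (z₂ - z₁) ⬝ᵥ Rmat α β *ᵥ (z₂ - z₁) ≤ (z₂ - z₁) ⬝ᵥ Rmat α β *ᵥ (v₂ - v₁) := by
  rw [dotProduct_Rmat_mulVec, dotProduct_Rmat_mulVec]
  refine add_le_add (Finset.sum_le_sum fun i _ => ?_) ?_
  · exact mul_le_mul_of_nonneg_left
      (((hf i).smulF_of_nonneg (div_pos (hα i) hβ).le).prox_firm (h₁.1 i) (h₂.1 i))
      (div_pos hβ (hα i)).le
  · exact mul_le_mul_of_nonneg_left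
      (((isProperConvex_iotaCstar b).smulF_of_nonneg hβ.le).prox_firm h₁.2 h₂.2)
      (one_div_pos.2 hβ).le

end Blocks

theorem TM_weakly_firmly_nonexpansive_general {s m : ℕ} {n : Fin s → ℕ}
    (f : ∀ i : Fin s, (Fin (n i) → ℝ) → EReal)
    (A : ∀ i : Fin s, Matrix (Fin m) (Fin (n i)) ℝ) (b : Fin m → ℝ)
    (hf : ∀ i, ProperConvexLsc (f i))
    (α : Fin s → ℝ) (hα : ∀ i, 0 < α i) (β : ℝ) (hβ : 0 < β)
    (M0 M1 M2 : Matrix (FIdx n m) (FIdx n m) ℝ) :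
    ∀ u1 w1 z1 u2 w2 z2 : FIdx n m → ℝ,
      isTM f A b α β M0 M1 M2 u1 w1 z1 → isTM f A b α β M0 M1 M2 u2 w2 z2 →
      (z2 - z1) ⬝ᵥ M0.mulVec (z2 - z1) ≤
        (z2 - z1) ⬝ᵥ (M1.mulVec (u2 - u1) + M2.mulVec (w2 - w1)) := by
  intro u1 w1 z1 u2 w2 z2 h1 h2
  have hfirm := isT_firm (fun i => (hf i).isProperConvex) b hα hβ h1 h2
  have hR := Rmat_mulVec_isTM_arg A (fun i => (hα i).ne') hβ.ne' M0 M1 M2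
  have hskew := dotProduct_mulVec_self_eq_zero_of_transpose_eq_neg (SAmat_transpose A) (z2 - z1)
  simp only [Matrix.mulVec_sub, hR, dotProduct_add, dotProduct_sub] at hfirm hskew ⊢
  linarith

/-- if `T_ℳ` is well-defined then it is weakly firmly nonexpansive with respect
to `ℳ = {M0, M1, M2}`. -/
theorem TM_weakly_firmly_nonexpansive {s m : ℕ} {n : Fin s → ℕ}
    (f : ∀ i : Fin s, (Fin (n i) → ℝ) → EReal)
    (A : ∀ i : Fin s, Matrix (Fin m) (Fin (n i)) ℝ) (b : Fin m → ℝ)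
    (hf : ∀ i, ProperConvexLsc (f i))
    (α : Fin s → ℝ) (hα : ∀ i, 0 < α i) (β : ℝ) (hβ : 0 < β)
    (M0 M1 M2 : Matrix (FIdx n m) (FIdx n m) ℝ)
    (hwd : TMWellDefined f A b α β M0 M1 M2) :
    ∀ u1 w1 z1 u2 w2 z2 : FIdx n m → ℝ,
      isTM f A b α β M0 M1 M2 u1 w1 z1 → isTM f A b α β M0 M1 M2 u2 w2 z2 →
      (z2 - z1) ⬝ᵥ M0.mulVec (z2 - z1) ≤
        (z2 - z1) ⬝ᵥ (M1.mulVec (u2 - u1) + M2.mulVec (w2 - w1)) :=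
  TM_weakly_firmly_nonexpansive_general f A b hf α hα β hβ M0 M1 M2

end
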